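/- arXiv:1807.03971 — 5 statements merged into one kernel-verified Lean document; each statement's English description precedes it below -/
import Mathlib

section
/- Let G₁ = (V₁,E₁) and G₂ = (V₂,E₂) be finite simple undirected graphs with disjoint vertex sets. Then the neighborhood polynomial of the join G₁ + G₂ satisfies N(G₁+G₂, x) = (1+x)^{|V₁|} · N(G₂, x) + (1+x)^{|V₂|} · N(G₁, x) − N(G₁, x) · N(G₂, x). -/
open Classical in
/-- The neighborhood polynomial of a finite simple graph `G`, evaluated at `x`:
the generating function of the family of vertex subsets having a common neighbor. -/
noncomputable def nhdPoly {V : Type*} [Fintype V] (G : SimpleGraph V) (x : ℝ) : ℝ :=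
  ∑ A ∈ Finset.univ.filter (fun A : Finset V => ∃ w : V, ∀ a ∈ A, G.Adj w a), x ^ A.card

/-- The join of two graphs `G₁`, `G₂` with disjoint vertex sets: the disjoint union of
`G₁` and `G₂` together with all edges joining vertices of `V₁` to vertices of `V₂`. -/
def SimpleGraph.join {V₁ V₂ : Type*} (G₁ : SimpleGraph V₁) (G₂ : SimpleGraph V₂) :
    SimpleGraph (V₁ ⊕ V₂) :=
  SimpleGraph.fromRel (fun a b => match a, b with
    | Sum.inl u, Sum.inl v => G₁.Adj u v
    | Sum.inr u, Sum.inr v => G₂.Adj u v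
    | Sum.inl _, Sum.inr _ => True
    | Sum.inr _, Sum.inl _ => True)

/-!
A vertex of `V₁` is adjacent in `G₁ + G₂` to every vertex of `V₂`, so a set `C ⊆ V₁ ⊕ V₂` has a
common neighbour in the join iff its `V₁`-part has one in `G₁` or its `V₂`-part has one in `G₂`.
Hence the sets without a common neighbour are exactly the products of such sets in `G₁` and `G₂`,
with generating function `((1+x)^|V₁| - N(G₁,x)) * ((1+x)^|V₂| - N(G₂,x))`; subtracting it from
`(1+x)^(|V₁|+|V₂|)` gives the formula.
-/

open Finset

namespace SimpleGraph

variable {V₁ V₂ : Type*} {G₁ : SimpleGraph V₁} {G₂ : SimpleGraph V₂}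

@[simp] lemma join_adj_inl_inl {u v : V₁} : (G₁.join G₂).Adj (.inl u) (.inl v) ↔ G₁.Adj u v := by
  simpa [join, G₁.adj_comm v u] using fun h => h.ne

@[simp] lemma join_adj_inr_inr {u v : V₂} : (G₁.join G₂).Adj (.inr u) (.inr v) ↔ G₂.Adj u v := by
  simpa [join, G₂.adj_comm v u] using fun h => h.ne

@[simp] lemma join_adj_inl_inr (u : V₁) (v : V₂) : (G₁.join G₂).Adj (.inl u) (.inr v) := by
  simp [join]

@[simp] lemma join_adj_inr_inl (u : V₂) (v : V₁) : (G₁.join G₂).Adj (.inr u) (.inl v) := by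
  simp [join]

lemma exists_forall_join_adj_iff (C : Finset (V₁ ⊕ V₂)) :
    (∃ w, ∀ c ∈ C, (G₁.join G₂).Adj w c) ↔
      (∃ w, ∀ a ∈ C.toLeft, G₁.Adj w a) ∨ (∃ w, ∀ b ∈ C.toRight, G₂.Adj w b) := by
  simp only [Sum.exists, Sum.forall, mem_toLeft, mem_toRight, join_adj_inl_inl, join_adj_inr_inr,
    join_adj_inl_inr, join_adj_inr_inl, implies_true, and_true, true_and]

end SimpleGraph

lemma Finset.sum_toLeft_mul_toRight {α β M : Type*} [Fintype α] [Fintype β] [CommSemiring M]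
    (f : Finset α → M) (g : Finset β → M) :
    ∑ C : Finset (α ⊕ β), f C.toLeft * g C.toRight = (∑ A, f A) * ∑ B, g B := by
  rw [sum_mul_sum, ← Fintype.sum_prod_type']
  exact Fintype.sum_equiv Finset.sumEquiv.toEquiv _ _ fun _ => rfl

lemma Finset.sum_filter_toLeft_and_toRight_pow_card {α β M : Type*} [Fintype α] [Fintype β]
    [CommSemiring M] (p : Finset α → Prop) (q : Finset β → Prop) [DecidablePred p]
    [DecidablePred q] (x : M) :
    ∑ C : Finset (α ⊕ β) with p C.toLeft ∧ q C.toRight, x ^ #C =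
      (∑ A with p A, x ^ #A) * ∑ B with q B, x ^ #B := by
  simp only [sum_filter, ← sum_toLeft_mul_toRight, ite_zero_mul_ite_zero, ← pow_add,
    card_toLeft_add_card_toRight, ite_and]

lemma Finset.sum_pow_card_univ {α M : Type*} [Fintype α] [CommSemiring M] (x : M) :
    ∑ A : Finset α, x ^ #A = (1 + x) ^ Fintype.card α := by
  simpa [add_comm] using Fintype.sum_pow_mul_eq_add_pow α x (1 : M)

lemma Finset.sum_filter_not_pow_card {α M : Type*} [Fintype α] [CommRing M]
    (p : Finset α → Prop) [DecidablePred p] (x : M) :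
    ∑ A with ¬ p A, x ^ #A = (1 + x) ^ Fintype.card α - ∑ A with p A, x ^ #A := by
  rw [← sum_pow_card_univ, ← sum_filter_add_sum_filter_not univ p, add_sub_cancel_left]

lemma Finset.sum_filter_toLeft_or_toRight_pow_card {α β M : Type*} [Fintype α] [Fintype β]
    [CommRing M] (p : Finset α → Prop) (q : Finset β → Prop) [DecidablePred p]
    [DecidablePred q] (x : M) :
    ∑ C : Finset (α ⊕ β) with p C.toLeft ∨ q C.toRight, x ^ #C =
      (1 + x) ^ Fintype.card α * (∑ B with q B, x ^ #B)
        + (1 + x) ^ Fintype.card β * (∑ A with p A, x ^ #A)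
        - (∑ A with p A, x ^ #A) * ∑ B with q B, x ^ #B := by
  have hcompl := sum_filter_not_pow_card (fun C : Finset (α ⊕ β) => p C.toLeft ∨ q C.toRight) x
  simp only [not_or] at hcompl
  rw [sum_filter_toLeft_and_toRight_pow_card (fun A => ¬ p A) (fun B => ¬ q B),
    sum_filter_not_pow_card, sum_filter_not_pow_card, Fintype.card_sum] at hcompl
  linear_combination hcompl

theorem nhdPoly_join_general {V₁ V₂ : Type*} [Fintype V₁] [Fintype V₂]
    (G₁ : SimpleGraph V₁) (G₂ : SimpleGraph V₂) (x : ℝ) :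
    nhdPoly (G₁.join G₂) x =
      (1 + x) ^ (Fintype.card V₁) * nhdPoly G₂ x
        + (1 + x) ^ (Fintype.card V₂) * nhdPoly G₁ x
        - nhdPoly G₁ x * nhdPoly G₂ x := by
  classical
  simp only [nhdPoly, SimpleGraph.exists_forall_join_adj_iff]
  exact sum_filter_toLeft_or_toRight_pow_card (fun A => ∃ w, ∀ a ∈ A, G₁.Adj w a)
    (fun B => ∃ w, ∀ b ∈ B, G₂.Adj w b) x

/-- The neighborhood polynomial of the join of two graphs with disjoint vertex sets satisfies
`N(G₁+G₂, x) = (1+x)^{|V₁|}·N(G₂,x) + (1+x)^{|V₂|}·N(G₁,x) − N(G₁,x)·N(G₂,x)`. -/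
theorem nhdPoly_join {V₁ V₂ : Type*} [Fintype V₁] [Fintype V₂]
    [Nonempty V₁] [Nonempty V₂] (G₁ : SimpleGraph V₁) (G₂ : SimpleGraph V₂) (x : ℝ) :
    nhdPoly (G₁.join G₂) x =
      (1 + x) ^ (Fintype.card V₁) * nhdPoly G₂ x
        + (1 + x) ^ (Fintype.card V₂) * nhdPoly G₁ x
        - nhdPoly G₁ x * nhdPoly G₂ x :=
  nhdPoly_join_general G₁ G₂ x
end

section
/- Let G = (V,E) be a finite simple graph and let U ⊆ V be a nonempty vertex subset. Let G_{U▷v} = (V ∪ {v}, E ∪ {{u,v} : u ∈ U}) be the graph obtained from G by adding a new vertex v (v ∉ V) and joining v to all vertices of U. For each nonempty W ⊆ U define A_W = x^{|W|} if ∩_{w∈W} N_G(w) = ∅ and A_W = 0 otherwise. Then N(G_{U▷v}, x) = N(G, x) + Σ_{∅ ≠ W ⊆ U} (−1)^{|W|+1} x·(1+x)^{|∩_{w∈W} N_G(w)|} + Σ_{∅ ≠ W ⊆ U} A_W. -/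
/-- The graph `G_{U▷v}` obtained from `G` by adding one new vertex (modelled as `none` in
`Option V`) and joining it to every vertex of the attachment set `U`. -/
def vertexAttach {V : Type*} (G : SimpleGraph V) (U : Set V) : SimpleGraph (Option V) :=
  SimpleGraph.fromRel (fun a b => match a, b with
    | some a, some b => G.Adj a b
    | some a, none => a ∈ U
    | _, _ => False)

/-!
Split the vertex sets of `G_{U▷v}` according to whether they contain `v`. A set `B ⊆ V` has a
common neighbour in `G_{U▷v}` iff it has one in `G` or `B ⊆ U`; the sets satisfying only the
second condition are the `W ⊆ U` with `⋂_{w∈W} N(w) = ∅` (nonempty, as `V` is), which give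
`Σ A_W`. A set `B ∪ {v}` has a common neighbour iff `B ⊆ N(u)` for some `u ∈ U`, and
inclusion–exclusion over `u ∈ U` counts these: the sets `B ∪ {v}` with `B ⊆ ⋂_{w∈W} N(w)`
contribute `x (1 + x)^{|⋂_{w∈W} N(w)|}`.
-/

open Finset

namespace Finset

theorem sum_finset_option {α M : Type*} [Fintype α] [AddCommMonoid M]
    (f : Finset (Option α) → M) :
    ∑ A, f A = ∑ B : Finset α, f (B.map .some) + ∑ B : Finset α, f (insertNone B) := by
  classical
  have hsome (g : Finset (Option α) → M) :
      ∑ A ∈ (univ.map .some).powerset, g A = ∑ B : Finset α, g (B.map .some) := by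
    rw [map_eq_image, powerset_image, sum_image (image_injOn_powerset_of_injOn
      Function.Embedding.some.injective.injOn), powerset_univ]
    simp [map_eq_image]
  rw [← powerset_univ, univ_option, insertNone, OrderEmbedding.coe_ofMapLEIff, cons_eq_insert,
    sum_powerset_insert (by simp), hsome, hsome]
  simp

theorem sum_powerset_pow_card {ι R : Type*} [CommSemiring R] (s : Finset ι) (x : R) :
    ∑ t ∈ s.powerset, x ^ #t = (1 + x) ^ #s := by
  simpa [add_comm] using sum_pow_mul_eq_add_pow x 1 s

end Finset

section vertexAttach

variable {V : Type*} (G : SimpleGraph V) (U : Set V)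

@[simp]
theorem vertexAttach_adj_some_some {a b : V} :
    (vertexAttach G U).Adj (some a) (some b) ↔ G.Adj a b := by
  simp only [vertexAttach, SimpleGraph.fromRel_adj, ne_eq, Option.some.injEq]
  exact ⟨fun ⟨_, h⟩ => h.elim id (·.symm), fun h => ⟨h.ne, .inl h⟩⟩

@[simp]
theorem vertexAttach_adj_some_none {a : V} : (vertexAttach G U).Adj (some a) none ↔ a ∈ U := by
  simp [vertexAttach]

@[simp]
theorem vertexAttach_adj_none_some {a : V} : (vertexAttach G U).Adj none (some a) ↔ a ∈ U := by
  simp [vertexAttach]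

theorem exists_vertexAttach_adj_map_some_iff (B : Finset V) :
    (∃ w, ∀ a ∈ B.map .some, (vertexAttach G U).Adj w a) ↔
      (∃ u, ∀ a ∈ B, G.Adj u a) ∨ ↑B ⊆ U := by
  simp [Option.exists, or_comm, Set.subset_def]

theorem exists_vertexAttach_adj_insertNone_iff (B : Finset V) :
    (∃ w, ∀ a ∈ insertNone B, (vertexAttach G U).Adj w a) ↔ ∃ u ∈ U, ∀ a ∈ B, G.Adj u a := by
  simp only [forall_mem_insertNone]
  simp [Option.exists]

end vertexAttach

namespace SimpleGraph

theorem iInter_neighborSet_eq_empty_iff {V : Type*} (G : SimpleGraph V) (W : Finset V) :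
    (⋂ w ∈ W, G.neighborSet w) = ∅ ↔ ¬∃ u, ∀ a ∈ W, G.Adj u a := by
  simp [Set.eq_empty_iff_forall_notMem, G.adj_comm]

variable {V : Type*} [Fintype V] (G : SimpleGraph V)

open Classical in
noncomputable def commonNbrs (W : Finset V) : Finset V := {a | ∀ w ∈ W, G.Adj w a}

theorem coe_commonNbrs (W : Finset V) :
    (G.commonNbrs W : Set V) = ⋂ w ∈ W, G.neighborSet w := by
  ext; simp [commonNbrs]

theorem card_commonNbrs (W : Finset V) :
    #(G.commonNbrs W) = Nat.card ↥(⋂ w ∈ W, G.neighborSet w) := by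
  rw [← coe_commonNbrs, Nat.card_coe_set_eq, Set.ncard_coe_finset]

open Classical in
theorem inf'_powerset_commonNbrs {W : Finset V} (hW : W.Nonempty) :
    W.inf' hW (fun w => (G.commonNbrs {w}).powerset) = (G.commonNbrs W).powerset := by
  ext B
  simp only [mem_inf', mem_powerset, commonNbrs, subset_iff, mem_filter, mem_univ, true_and,
    mem_singleton, forall_eq]
  exact ⟨fun h a ha w hw => h w hw ha, fun h w hw a ha => h ha w hw⟩

end SimpleGraph

section nhdPoly

variable {V : Type*} [Fintype V] (G : SimpleGraph V)

open Classical in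
theorem nhdPoly_vertexAttach_eq (U : Set V) (x : ℝ) :
    nhdPoly (vertexAttach G U) x =
      (∑ B : Finset V, if (∃ u, ∀ a ∈ B, G.Adj u a) ∨ ↑B ⊆ U then x ^ #B else 0)
        + ∑ B : Finset V, if ∃ u ∈ U, ∀ a ∈ B, G.Adj u a then x ^ (#B + 1) else 0 := by
  rw [nhdPoly, sum_filter, sum_finset_option]
  simp only [exists_vertexAttach_adj_map_some_iff, exists_vertexAttach_adj_insertNone_iff,
    card_map, card_insertNone]

open Classical in
theorem sum_ite_exists_adj_or_subset [Nonempty V] (U : Finset V) (x : ℝ) :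
    (∑ B : Finset V, if (∃ u, ∀ a ∈ B, G.Adj u a) ∨ ↑B ⊆ (U : Set V) then x ^ #B else 0) =
      nhdPoly G x + ∑ W ∈ U.powerset.filter (· ≠ ∅),
        if (⋂ w ∈ W, G.neighborSet w) = ∅ then x ^ #W else 0 := by
  have hsplit (B : Finset V) :
      (if (∃ u, ∀ a ∈ B, G.Adj u a) ∨ ↑B ⊆ (U : Set V) then x ^ #B else 0) =
        (if ∃ u, ∀ a ∈ B, G.Adj u a then x ^ #B else 0) +
          if B ⊆ U ∧ ¬∃ u, ∀ a ∈ B, G.Adj u a then x ^ #B else 0 := by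
    by_cases h : ∃ u, ∀ a ∈ B, G.Adj u a <;> simp [h]
  rw [sum_congr rfl fun B _ => hsplit B, sum_add_distrib, nhdPoly, sum_filter]
  congr 1
  rw [← sum_filter, ← sum_filter]
  refine sum_congr (ext fun B => ?_) fun _ _ => rfl
  simp only [SimpleGraph.iInter_neighborSet_eq_empty_iff, mem_filter, mem_univ, true_and, mem_powerset]
  refine ⟨fun ⟨hBU, hB⟩ => ⟨⟨hBU, ?_⟩, hB⟩, fun ⟨⟨hBU, _⟩, hB⟩ => ⟨hBU, hB⟩⟩
  rintro rfl
  exact hB (by simp)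

open Classical in
theorem sum_ite_exists_mem_adj (U : Finset V) (x : ℝ) :
    (∑ B : Finset V, if ∃ u ∈ U, ∀ a ∈ B, G.Adj u a then x ^ (#B + 1) else 0) =
      ∑ W ∈ U.powerset.filter (· ≠ ∅),
        (-1 : ℝ) ^ (#W + 1) * (x * (1 + x) ^ Nat.card ↥(⋂ w ∈ W, G.neighborSet w)) := by
  have hunion : ({B | ∃ u ∈ U, ∀ a ∈ B, G.Adj u a} : Finset (Finset V)) =
      U.biUnion fun u => (G.commonNbrs {u}).powerset := by
    ext B; simp [SimpleGraph.commonNbrs, subset_iff]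
  simp_rw [← nonempty_iff_ne_empty]
  rw [← sum_filter, hunion, inclusion_exclusion_sum_biUnion,
    ← sum_coe_sort (U.powerset.filter (·.Nonempty))]
  refine sum_congr rfl fun W _ => ?_
  rw [G.inf'_powerset_commonNbrs, ← G.card_commonNbrs]
  simp_rw [pow_succ', ← mul_sum, sum_powerset_pow_card, zsmul_eq_mul]
  push_cast
  ring

end nhdPoly

open Classical in
theorem nhdPoly_vertex_attach_general {V : Type*} [Fintype V] [Nonempty V]
    (G : SimpleGraph V) (U : Finset V) (x : ℝ) :
    nhdPoly (vertexAttach G ↑U) x =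
      nhdPoly G x
        + ∑ W ∈ U.powerset.filter (· ≠ ∅),
            (-1 : ℝ) ^ (W.card + 1) * (x * (1 + x) ^ (Nat.card ↥(⋂ w ∈ W, G.neighborSet w)))
        + ∑ W ∈ U.powerset.filter (· ≠ ∅),
            (if (⋂ w ∈ W, G.neighborSet w) = (∅ : Set V) then x ^ W.card else 0) := by
  rw [nhdPoly_vertexAttach_eq, sum_ite_exists_adj_or_subset]
  simp only [mem_coe]
  rw [sum_ite_exists_mem_adj]
  ring

open Classical in
/-- Vertex attachment formula:
`N(G_{U▷v}, x) = N(G,x) + Σ_{∅≠W⊆U} (−1)^{|W|+1} x(1+x)^{|∩_{w∈W} N_G(w)|} + Σ_{∅≠W⊆U} A_W`,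
where `A_W = x^{|W|}` if `∩_{w∈W} N_G(w) = ∅` and `A_W = 0` otherwise. -/
theorem nhdPoly_vertex_attach {V : Type*} [Fintype V] [Nonempty V]
    (G : SimpleGraph V) (U : Finset V) (hU : U ≠ ∅) (x : ℝ) :
    nhdPoly (vertexAttach G ↑U) x =
      nhdPoly G x
        + ∑ W ∈ U.powerset.filter (· ≠ ∅),
            (-1 : ℝ) ^ (W.card + 1) * (x * (1 + x) ^ (Nat.card ↥(⋂ w ∈ W, G.neighborSet w)))
        + ∑ W ∈ U.powerset.filter (· ≠ ∅),
            (if (⋂ w ∈ W, G.neighborSet w) = (∅ : Set V) then x ^ W.card else 0) :=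
  nhdPoly_vertex_attach_general G U x
end

section
/- Let G = (V,E) be a finite simple graph with at least two vertices and let v ∈ V. Then N(G, x) = N(G−v, x) + Σ_{∅ ≠ U ⊆ N_G(v)} (−1)^{|U|+1} x·(1+x)^{|∩_{u∈U} N_{G−v}(u)|} + Σ_{∅ ≠ U ⊆ N_G(v)} A_U, where for nonempty U ⊆ N_G(v), A_U = x^{|U|} if ∩_{u∈U} N_{G−v}(u) = ∅ and A_U = 0 otherwise. -/
open Finset Classical

theorem Finset.sum_pow_card_powerset {α R : Type*} [CommSemiring R] (s : Finset α) (x : R) :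
    ∑ t ∈ s.powerset, x ^ #t = (1 + x) ^ #s := by
  simpa [add_comm] using sum_pow_mul_eq_add_pow x 1 s

namespace SimpleGraph

variable {V : Type*} [Fintype V]

noncomputable def neighborhoodComplex (G : SimpleGraph V) : Finset (Finset V) :=
  univ.filter fun A => ∃ w, ∀ a ∈ A, G.Adj w a

theorem nhdPoly_eq_sum_neighborhoodComplex (G : SimpleGraph V) (x : ℝ) :
    nhdPoly G x = ∑ A ∈ G.neighborhoodComplex, x ^ #A :=
  rfl

theorem mem_neighborhoodComplex {G : SimpleGraph V} {A : Finset V} :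
    A ∈ G.neighborhoodComplex ↔ ∃ w, ∀ a ∈ A, G.Adj w a := by
  simp [neighborhoodComplex]

theorem notMem_neighborhoodComplex_iff {G : SimpleGraph V} {A : Finset V} :
    A ∉ G.neighborhoodComplex ↔ ⋂ u ∈ A, G.neighborSet u = ∅ := by
  simp [mem_neighborhoodComplex, Set.eq_empty_iff_forall_notMem, adj_comm]

theorem neighborhoodComplex_mono {G H : SimpleGraph V} (h : H ≤ G) :
    H.neighborhoodComplex ⊆ G.neighborhoodComplex := by
  intro A hA
  obtain ⟨w, hw⟩ := mem_neighborhoodComplex.1 hA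
  exact mem_neighborhoodComplex.2 ⟨w, fun a ha => h (hw a ha)⟩

theorem sum_pow_card_biUnion_powerset_neighborFinset {R : Type*} [CommRing R]
    (H : SimpleGraph V) [DecidableRel H.Adj] (s : Finset V) (x : R) :
    ∑ B ∈ s.biUnion (fun w => (H.neighborFinset w).powerset), x ^ #B =
      ∑ U ∈ s.powerset.filter (·.Nonempty),
        (-1) ^ (#U + 1) * (1 + x) ^ Nat.card ↥(⋂ u ∈ U, H.neighborSet u) := by
  rw [inclusion_exclusion_sum_biUnion, ← sum_coe_sort (s.powerset.filter (·.Nonempty))]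
  refine sum_congr rfl fun U _ => ?_
  have hpow : U.1.inf' (mem_filter.1 U.2).2 (fun w => (H.neighborFinset w).powerset) =
      (U.1.inf fun w => H.neighborFinset w).powerset := by
    ext B
    simp [inf'_eq_inf, mem_inf, subset_iff]
  have hcard :
      Nat.card ↥(⋂ u ∈ U.1, H.neighborSet u) = #(U.1.inf fun w => H.neighborFinset w) := by
    have hset : ⋂ u ∈ U.1, H.neighborSet u = ↑(U.1.inf fun w => H.neighborFinset w) := by
      ext a
      simp [mem_inf]
    rw [hset, Nat.card_coe_set_eq, Set.ncard_coe_finset]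
  rw [hpow, sum_pow_card_powerset, hcard, zsmul_eq_mul]
  push_cast
  ring

variable {G : SimpleGraph V} {v : V}

theorem filter_mem_sdiff_neighborhoodComplex_deleteIncidenceSet :
    (G.neighborhoodComplex \ (G.deleteIncidenceSet v).neighborhoodComplex).filter (v ∈ ·) =
      ((G.neighborFinset v).biUnion
        fun w => ((G.deleteIncidenceSet v).neighborFinset w).powerset).image (insert v) := by
  ext A
  simp only [mem_filter, mem_sdiff, mem_image, mem_biUnion, mem_powerset, mem_neighborFinset,
    mem_neighborhoodComplex, subset_iff, deleteIncidenceSet_adj]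
  constructor
  · rintro ⟨⟨⟨w, hw⟩, -⟩, hv⟩
    refine ⟨A.erase v, ⟨w, (hw v hv).symm, fun a ha => ?_⟩, insert_erase hv⟩
    exact ⟨hw a (mem_of_mem_erase ha), (hw v hv).ne, ne_of_mem_erase ha⟩
  · rintro ⟨B, ⟨w, hvw, hB⟩, rfl⟩
    refine ⟨⟨⟨w, fun a ha => ?_⟩, fun ⟨z, hz⟩ => (hz v (mem_insert_self v B)).2.2 rfl⟩,
      mem_insert_self v B⟩
    rcases mem_insert.1 ha with rfl | ha
    · exact hvw.symm
    · exact (hB ha).1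

theorem filter_notMem_sdiff_neighborhoodComplex_deleteIncidenceSet :
    (G.neighborhoodComplex \ (G.deleteIncidenceSet v).neighborhoodComplex).filter (v ∉ ·) =
      (univ.filter fun U : Finset V => U ≠ ∅ ∧ ↑U ⊆ G.neighborSet v).filter
        fun U => ⋂ u ∈ U, (G.deleteIncidenceSet v).neighborSet u = ∅ := by
  ext A
  rw [mem_filter, mem_sdiff, notMem_neighborhoodComplex_iff]
  simp only [mem_filter, mem_univ, true_and, mem_neighborhoodComplex]
  constructor
  · rintro ⟨⟨⟨w, hw⟩, hI⟩, hv⟩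
    have hwv : w = v := by
      by_contra hwv
      have hw' : w ∈ ⋂ u ∈ A, (G.deleteIncidenceSet v).neighborSet u := by
        simp only [Set.mem_iInter, mem_neighborSet, deleteIncidenceSet_adj]
        exact fun u hu => ⟨(hw u hu).symm, fun h => hv (h ▸ hu), hwv⟩
      rwa [hI] at hw'
    subst hwv
    refine ⟨⟨?_, fun a ha => hw a ha⟩, hI⟩
    rintro rfl
    simp only [notMem_empty, Set.iInter_of_empty, Set.iInter_univ, Set.univ_eq_empty_iff] at hI
    exact hI.false w
  · rintro ⟨⟨-, hsub⟩, hI⟩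
    exact ⟨⟨⟨v, fun a ha => hsub ha⟩, hI⟩, fun hv => G.irrefl (hsub hv)⟩

theorem sum_pow_card_filter_mem_sdiff_neighborhoodComplex_deleteIncidenceSet {R : Type*}
    [CommRing R] (x : R) :
    ∑ A ∈ (G.neighborhoodComplex \ (G.deleteIncidenceSet v).neighborhoodComplex).filter (v ∈ ·),
      x ^ #A =
    ∑ U ∈ univ.filter (fun U : Finset V => U ≠ ∅ ∧ ↑U ⊆ G.neighborSet v),
      (-1) ^ (#U + 1) *
        (x * (1 + x) ^ Nat.card ↥(⋂ u ∈ U, (G.deleteIncidenceSet v).neighborSet u)) := by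
  have hvB : ∀ B ∈ (G.neighborFinset v).biUnion
      (fun w => ((G.deleteIncidenceSet v).neighborFinset w).powerset), v ∉ B := by
    simp only [mem_biUnion, mem_powerset, mem_neighborFinset, subset_iff, deleteIncidenceSet_adj]
    rintro B ⟨w, -, hB⟩ hv
    exact (hB hv).2.2 rfl
  have hnbrs : (G.neighborFinset v).powerset.filter (·.Nonempty) =
      univ.filter fun U : Finset V => U ≠ ∅ ∧ ↑U ⊆ G.neighborSet v := by
    ext U
    simp [nonempty_iff_ne_empty, Set.subset_def, subset_iff, and_comm]
  rw [filter_mem_sdiff_neighborhoodComplex_deleteIncidenceSet,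
    sum_image fun B hB C hC h => by rw [← erase_insert (hvB B hB), h, erase_insert (hvB C hC)],
    sum_congr rfl fun B hB => by rw [card_insert_of_notMem (hvB B hB), pow_succ], ← sum_mul,
    sum_pow_card_biUnion_powerset_neighborFinset, hnbrs, sum_mul]
  exact sum_congr rfl fun U _ => by ring

end SimpleGraph

open SimpleGraph

open Classical in
/-- `G − v` is encoded as `G.deleteEdges (G.incidenceSet v)`, on the whole of `V` with `v`
isolated; its neighborhood polynomial is that of the induced subgraph on `V \ {v}` as soon as
the latter has a vertex. -/
theorem nhdPoly_vertex_removal_general {V : Type*} [Fintype V]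
    (G : SimpleGraph V) (v : V) (x : ℝ) :
    nhdPoly G x =
      nhdPoly (G.deleteEdges (G.incidenceSet v)) x
        + ∑ U ∈ Finset.univ.filter (fun U : Finset V =>
            U ≠ ∅ ∧ (↑U : Set V) ⊆ G.neighborSet v),
            (-1 : ℝ) ^ (U.card + 1)
              * (x * (1 + x) ^
                  (Nat.card ↥(⋂ u ∈ U, (G.deleteEdges (G.incidenceSet v)).neighborSet u)))
        + ∑ U ∈ Finset.univ.filter (fun U : Finset V =>
            U ≠ ∅ ∧ (↑U : Set V) ⊆ G.neighborSet v),
            (if (⋂ u ∈ U, (G.deleteEdges (G.incidenceSet v)).neighborSet u) = (∅ : Set V)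
             then x ^ U.card else 0) := by
  simp only [← deleteIncidenceSet.eq_1]
  rw [nhdPoly_eq_sum_neighborhoodComplex, nhdPoly_eq_sum_neighborhoodComplex,
    ← sum_sdiff (neighborhoodComplex_mono (G.deleteIncidenceSet_le v)),
    ← sum_filter_add_sum_filter_not _ (v ∈ ·),
    sum_pow_card_filter_mem_sdiff_neighborhoodComplex_deleteIncidenceSet,
    filter_notMem_sdiff_neighborhoodComplex_deleteIncidenceSet, ← sum_filter]
  ring

open Classical in
/-- Vertex removal recursion for the neighborhood polynomial.  Here `G − v` is modelled as
the graph on `V` obtained by deleting all edges incident with `v` (so that `v` becomes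
isolated, which does not affect the neighborhood complex; since `G` has at least two
vertices, this graph has the same neighborhood polynomial as the induced subgraph on
`V \ {v}`), and `N_{G−v}(u)` is its open neighborhood of `u`. -/
theorem nhdPoly_vertex_removal {V : Type*} [Fintype V] (hV : 1 < Fintype.card V)
    (G : SimpleGraph V) (v : V) (x : ℝ) :
    nhdPoly G x =
      nhdPoly (G.deleteEdges (G.incidenceSet v)) x
        + ∑ U ∈ Finset.univ.filter (fun U : Finset V =>
            U ≠ ∅ ∧ (↑U : Set V) ⊆ G.neighborSet v),
            (-1 : ℝ) ^ (U.card + 1)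
              * (x * (1 + x) ^
                  (Nat.card ↥(⋂ u ∈ U, (G.deleteEdges (G.incidenceSet v)).neighborSet u)))
        + ∑ U ∈ Finset.univ.filter (fun U : Finset V =>
            U ≠ ∅ ∧ (↑U : Set V) ⊆ G.neighborSet v),
            (if (⋂ u ∈ U, (G.deleteEdges (G.incidenceSet v)).neighborSet u) = (∅ : Set V)
             then x ^ U.card else 0) :=
  nhdPoly_vertex_removal_general G v x
end

section
/- Let G = (V,E) be a finite simple graph on n vertices and let Ḡ denote its complement graph. Then the domination polynomial of G and the neighborhood polynomial of Ḡ satisfy D(G, x) + N(Ḡ, x) = (1+x)^n. -/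
open Classical in
/-- The domination polynomial of a finite simple graph `G`, evaluated at `x`:
the generating function of the family of dominating sets of `G`. -/
noncomputable def domPoly {V : Type*} [Fintype V] (G : SimpleGraph V) (x : ℝ) : ℝ :=
  ∑ W ∈ Finset.univ.filter (fun W : Finset V => ∀ v : V, v ∈ W ∨ ∃ w ∈ W, G.Adj w v),
    x ^ W.card

/-!
A vertex set `W` fails to dominate `G` exactly when some vertex `v` lies outside `W` and has
no `G`-neighbour in `W`, i.e. when `v` is a common neighbour of `W` in `Gᶜ`. So the
non-dominating sets of `G` are precisely the faces of the neighbourhood complex of `Gᶜ`, and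
`D(G,x) + N(Gᶜ,x)` is the generating function `∑_{W ⊆ V} x^|W| = (1+x)^n` of all vertex sets.
-/

theorem Fintype.sum_pow_card_finset {α R : Type*} [Fintype α] [CommSemiring R] (x : R) :
    ∑ s : Finset α, x ^ s.card = (1 + x) ^ Fintype.card α := by
  simpa [add_comm] using Fintype.sum_pow_mul_eq_add_pow α x 1

namespace SimpleGraph

theorem exists_forall_compl_adj_iff_not_dominating {V : Type*} (G : SimpleGraph V)
    (W : Finset V) :
    (∃ w, ∀ a ∈ W, Gᶜ.Adj w a) ↔ ¬∀ v, v ∈ W ∨ ∃ w ∈ W, G.Adj w v := by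
  constructor
  · rintro ⟨w, hw⟩ hdom
    rcases hdom w with hwW | ⟨u, huW, hadj⟩
    · exact (hw w hwW).ne rfl
    · exact (hw u huW).2 hadj.symm
  · intro hnot
    push Not at hnot
    obtain ⟨v, hvW, hv⟩ := hnot
    exact ⟨v, fun a haW => ⟨fun hva => hvW (hva ▸ haW), fun hadj => hv a haW hadj.symm⟩⟩

end SimpleGraph

/-- The domination polynomial of `G` and the neighborhood polynomial of its complement
satisfy `D(G,x) + N(Ḡ,x) = (1+x)^n`, where `n` is the number of vertices. -/
theorem domPoly_add_nhdPoly_compl {V : Type*} [Fintype V] (G : SimpleGraph V) (x : ℝ) :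
    domPoly G x + nhdPoly Gᶜ x = (1 + x) ^ (Fintype.card V) := by
  classical
  have hnhd : nhdPoly Gᶜ x = ∑ W ∈ Finset.univ.filter
      (fun W : Finset V => ¬∀ v : V, v ∈ W ∨ ∃ w ∈ W, G.Adj w v), x ^ W.card := by
    simp only [nhdPoly, G.exists_forall_compl_adj_iff_not_dominating]
  rw [domPoly, hnhd, Finset.sum_filter_add_sum_filter_not, Fintype.sum_pow_card_finset]
end

section
/- For every integer n ≥ 4, the neighborhood polynomial of the ladder graph L_n (the Cartesian product of the path P₂ with the path P_n, a graph on 2n vertices) satisfies N(L_n, x) = 1 + 4x + 2x² + (2n − 4)·x·(1+x)². -/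
open Finset SimpleGraph Function

theorem nhdPoly_eq_sum_of_injective {V ι : Type*} [Fintype V] [Fintype ι] (G : SimpleGraph V)
    {face : ι → Finset V} (hinj : Injective face)
    (hrange : ∀ A, (∃ w, ∀ a ∈ A, G.Adj w a) ↔ A ∈ Set.range face) (x : ℝ) :
    nhdPoly G x = ∑ i, x ^ (face i).card := by
  classical
  have hfaces : univ.filter (fun A : Finset V => ∃ w, ∀ a ∈ A, G.Adj w a) =
      univ.map ⟨face, hinj⟩ := by
    ext A
    simp [hrange, eq_comm]
  rw [nhdPoly, hfaces, sum_map]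
  rfl

namespace Finset

variable {α : Type*} [DecidableEq α] {A : Finset α} {a b c : α}

theorem subset_pair_iff : A ⊆ {a, b} ↔ A = ∅ ∨ A = {a} ∨ A = {b} ∨ A = {a, b} := by
  refine ⟨fun h => ?_, by rintro (rfl | rfl | rfl | rfl) <;> simp [subset_iff]⟩
  have hA : A = ({a, b} : Finset α).filter (· ∈ A) := by
    ext x
    simpa using fun hx => h hx
  by_cases ha : a ∈ A <;> by_cases hb : b ∈ A <;>
    simp only [filter_insert, filter_singleton, ha, hb, if_true, if_false] at hA <;> tauto

theorem subset_triple_iff :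
    A ⊆ {a, b, c} ↔ A = ∅ ∨ A = {a} ∨ A = {b} ∨ A = {c} ∨ A = {a, b} ∨ A = {a, c} ∨
      A = {b, c} ∨ A = {a, b, c} := by
  refine ⟨fun h => ?_, by
    rintro (rfl | rfl | rfl | rfl | rfl | rfl | rfl | rfl) <;> simp [subset_iff]⟩
  have hA : A = ({a, b, c} : Finset α).filter (· ∈ A) := by
    ext x
    simpa using fun hx => h hx
  by_cases ha : a ∈ A <;> by_cases hb : b ∈ A <;> by_cases hc : c ∈ A <;>
    simp only [filter_insert, filter_singleton, ha, hb, hc, if_true, if_false] at hA <;> tauto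

end Finset

theorem boxProd_pathGraph_adj {k n : ℕ} {u v : Fin k × Fin n} :
    (pathGraph k □ pathGraph n).Adj u v ↔
      (u.1.val + 1 = v.1.val ∨ v.1.val + 1 = u.1.val) ∧ u.2.val = v.2.val ∨
      (u.2.val + 1 = v.2.val ∨ v.2.val + 1 = u.2.val) ∧ u.1.val = v.1.val := by
  simp [boxProd_adj, pathGraph_adj, Fin.ext_iff]

section Ladder

abbrev ladder (n : ℕ) : SimpleGraph (Fin 2 × Fin n) := pathGraph 2 □ pathGraph n

variable {m : ℕ}

abbrev LadderFaceIndex (m : ℕ) : Type :=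
  Unit ⊕ (Fin 2 × Fin (m + 2)) ⊕ (Fin 2 × Fin (m + 1)) ⊕ (Fin 2 × Fin m) ⊕ (Fin 2 × Fin m)

/-- `i.rev` is the other rail; the last kind of face is the neighbourhood of the interior vertex
`(i, c + 1)`. -/
def ladderFace : LadderFaceIndex m → Finset (Fin 2 × Fin (m + 2))
  | .inl () => ∅
  | .inr (.inl v) => {v}
  | .inr (.inr (.inl (i, c))) => {(i, c.castSucc), (i.rev, c.succ)}
  | .inr (.inr (.inr (.inl (i, c)))) => {(i, c.castSucc.castSucc), (i, c.succ.succ)}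
  | .inr (.inr (.inr (.inr (i, c)))) =>
      {(i.rev, c.succ.castSucc), (i, c.castSucc.castSucc), (i, c.succ.succ)}

theorem ladderFace_injective : Injective (ladderFace (m := m)) := by
  rintro (⟨⟩ | v | ⟨i, c⟩ | ⟨i, c⟩ | ⟨i, c⟩) (⟨⟩ | w | ⟨j, d⟩ | ⟨j, d⟩ | ⟨j, d⟩) h <;>
  · have h₁ := h.subset
    have h₂ := h.superset
    simp only [ladderFace, insert_subset_iff, singleton_subset_iff, empty_subset, subset_empty,
      mem_insert, mem_singleton, Prod.ext_iff, Fin.ext_iff, Fin.val_rev, Fin.val_castSucc,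
      Fin.val_succ, insert_ne_empty, singleton_ne_empty, Sum.inl.injEq, Sum.inr.injEq,
      reduceCtorEq] at h₁ h₂ ⊢ <;>
    omega

theorem sum_pow_card_ladderFace (x : ℝ) :
    ∑ f : LadderFaceIndex m, x ^ (ladderFace f).card =
      1 + (2 * m + 4) * x + (4 * m + 2) * x ^ 2 + 2 * m * x ^ 3 := by
  have card_diag (i : Fin 2) (c : Fin (m + 1)) :
      ({(i, c.castSucc), (i.rev, c.succ)} : Finset (Fin 2 × Fin (m + 2))).card = 2 :=
    card_pair <| by
      simp only [ne_eq, Prod.mk.injEq, Fin.ext_iff, Fin.val_castSucc, Fin.val_succ]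
      omega
  have card_gap (i : Fin 2) (c : Fin m) :
      ({(i, c.castSucc.castSucc), (i, c.succ.succ)} : Finset (Fin 2 × Fin (m + 2))).card = 2 :=
    card_pair <| by
      simp only [ne_eq, Prod.mk.injEq, Fin.ext_iff, Fin.val_castSucc, Fin.val_succ]
      omega
  have card_nbhd (i : Fin 2) (c : Fin m) :
      ({(i.rev, c.succ.castSucc), (i, c.castSucc.castSucc), (i, c.succ.succ)} :
        Finset (Fin 2 × Fin (m + 2))).card = 3 := by
    rw [card_insert_of_notMem, card_gap]
    simp only [mem_insert, mem_singleton, Prod.mk.injEq, Fin.ext_iff, Fin.val_rev,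
      Fin.val_castSucc, Fin.val_succ]
    omega
  simp only [Fintype.sum_sum_type, ladderFace, univ_unique, card_empty, card_singleton, card_diag,
    card_gap, card_nbhd, sum_const, card_univ, Fintype.card_prod,
    Fintype.card_fin, nsmul_eq_mul]
  push_cast
  ring

theorem empty_mem_range_ladderFace : (∅ : Finset (Fin 2 × Fin (m + 2))) ∈ Set.range ladderFace :=
  ⟨.inl (), rfl⟩

theorem singleton_mem_range_ladderFace (v : Fin 2 × Fin (m + 2)) :
    {v} ∈ Set.range ladderFace :=
  ⟨.inr (.inl v), rfl⟩

theorem exists_common_neighbor_ladderFace (f : LadderFaceIndex m) :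
    ∃ w, ∀ a ∈ ladderFace f, (ladder (m + 2)).Adj w a := by
  rcases f with _ | ⟨i, c⟩ | ⟨i, c⟩ | ⟨i, c⟩ | ⟨i, c⟩ <;>
    [refine ⟨(0, 0), ?_⟩; refine ⟨(i.rev, c), ?_⟩; refine ⟨(i, c.succ), ?_⟩;
      refine ⟨(i, c.succ.castSucc), ?_⟩; refine ⟨(i, c.succ.castSucc), ?_⟩] <;>
  · simp only [ladderFace, mem_insert, mem_singleton, notMem_empty, forall_eq_or_imp, forall_eq,
      IsEmpty.forall_iff, forall_const, boxProd_pathGraph_adj, Fin.val_rev, Fin.val_castSucc,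
      Fin.val_succ, and_true, or_true, true_and, true_or] <;>
    omega

theorem exists_ladderFace_superset_neighbors (w : Fin 2 × Fin (m + 2)) :
    ∃ f, ∀ a, (ladder (m + 2)).Adj w a → a ∈ ladderFace f := by
  obtain ⟨i, c⟩ := w
  have hc : c.val = 0 ∨ c.val = m + 1 ∨ 0 < c.val ∧ c.val < m + 1 := by omega
  rcases hc with hc | hc | hc <;>
    [refine ⟨.inr (.inr (.inl (i.rev, 0))), ?_⟩;
      refine ⟨.inr (.inr (.inl (i, Fin.last m))), ?_⟩;
      refine ⟨.inr (.inr (.inr (.inr (i, ⟨c.val - 1, by omega⟩)))), ?_⟩] <;>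
  · rintro ⟨j, d⟩ hadj
    simp only [ladderFace, boxProd_pathGraph_adj, mem_insert, mem_singleton, Prod.ext_iff,
      Fin.ext_iff, Fin.val_rev, Fin.val_castSucc, Fin.val_succ, Fin.val_last,
      Fin.val_zero] at hadj ⊢
    omega

theorem mem_range_ladderFace_of_subset {A : Finset (Fin 2 × Fin (m + 2))}
    {f : LadderFaceIndex m} (h : A ⊆ ladderFace f) : A ∈ Set.range ladderFace := by
  rcases f with _ | v | ⟨i, c⟩ | ⟨i, c⟩ | ⟨i, c⟩
  · rw [subset_empty.1 h]
    exact empty_mem_range_ladderFace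
  · obtain rfl | rfl := subset_singleton_iff.1 h
    exacts [empty_mem_range_ladderFace, singleton_mem_range_ladderFace v]
  · obtain rfl | rfl | rfl | rfl := subset_pair_iff.1 h
    exacts [empty_mem_range_ladderFace, singleton_mem_range_ladderFace _,
      singleton_mem_range_ladderFace _, ⟨.inr (.inr (.inl (i, c))), rfl⟩]
  · obtain rfl | rfl | rfl | rfl := subset_pair_iff.1 h
    exacts [empty_mem_range_ladderFace, singleton_mem_range_ladderFace _,
      singleton_mem_range_ladderFace _, ⟨.inr (.inr (.inr (.inl (i, c)))), rfl⟩]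
  · obtain rfl | rfl | rfl | rfl | rfl | rfl | rfl | rfl := subset_triple_iff.1 h
    exacts [empty_mem_range_ladderFace, singleton_mem_range_ladderFace _,
      singleton_mem_range_ladderFace _, singleton_mem_range_ladderFace _,
      ⟨.inr (.inr (.inl (i, c.castSucc))), pair_comm _ _⟩,
      ⟨.inr (.inr (.inl (i.rev, c.succ))), by simp [ladderFace]⟩,
      ⟨.inr (.inr (.inr (.inl (i, c)))), rfl⟩, ⟨.inr (.inr (.inr (.inr (i, c)))), rfl⟩]

theorem exists_common_neighbor_iff_mem_range_ladderFace (A : Finset (Fin 2 × Fin (m + 2))) :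
    (∃ w, ∀ a ∈ A, (ladder (m + 2)).Adj w a) ↔ A ∈ Set.range ladderFace := by
  constructor
  · rintro ⟨w, hw⟩
    obtain ⟨f, hf⟩ := exists_ladderFace_superset_neighbors w
    exact mem_range_ladderFace_of_subset fun a ha => hf a (hw a ha)
  · rintro ⟨f, rfl⟩
    exact exists_common_neighbor_ladderFace f

end Ladder

/-- The neighborhood polynomial of the ladder graph `L_n = P₂ □ P_n` (`n ≥ 4`):
`N(L_n, x) = 1 + 4x + 2x² + (2n − 4)·x·(1+x)²`. -/
theorem nhdPoly_ladder (n : ℕ) (hn : 4 ≤ n) (x : ℝ) :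
    nhdPoly (SimpleGraph.pathGraph 2 □ SimpleGraph.pathGraph n) x =
      1 + 4 * x + 2 * x ^ 2 + (2 * (n : ℝ) - 4) * x * (1 + x) ^ 2 := by
  obtain ⟨m, rfl⟩ : ∃ m, n = m + 2 := ⟨n - 2, by omega⟩
  rw [nhdPoly_eq_sum_of_injective _ ladderFace_injective
    exists_common_neighbor_iff_mem_range_ladderFace, sum_pow_card_ladderFace]
  push_cast
  ring
end
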